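/- arXiv:1707.06614 — 3 statements merged into one kernel-verified Lean document; each statement's English description precedes it below -/
import Mathlib

section
/- Let w be a standard monomial of length n ≥ 0 (of either type), with weight Z₁ and superweight Z₂ as defined above. Then the point (Z₁, Z₂) satisfies -½·log₂(Z₁) - 5/2 < Z₂ < ½·log₂(Z₁) + 2. -/
/-!
Both types of monomial have the shape `Z₁ = 2^(m+1) - ∑_{i ∈ S} 2^i`, `Z₂ = c - ∑_{i ∈ S} (-1)^i`
with `S ⊆ {0, …, m-1}` and `|c| ≤ 2` (`m = n - 1`, `c = (-1)^n` for the first type; `m = n - 2`,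
`c = 2 (-1)^n` for the second). The binary sum is below `2^m`, so `log₂ Z₁ > m`; the alternating
sum lies in `[-m/2, (m+1)/2]`, so `-m/2 - 5/2 ≤ Z₂ ≤ m/2 + 2`.
-/

open Finset

section AlternatingSum

variable {R : Type*} [Field R] [LinearOrder R] [IsStrictOrderedRing R] {m : ℕ} {S : Finset ℕ}

-- `(1 + (-1)^i) / 2` and `(-1 + (-1)^i) / 2` are the indicators of even and (negated) odd `i`.
lemma sum_neg_one_pow_le_of_subset_range (hS : S ⊆ range m) :
    ∑ i ∈ S, (-1 : R) ^ i ≤ (m + 1) / 2 := by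
  have h i := abs_le.mp (abs_neg_one_pow (α := R) i).le
  calc ∑ i ∈ S, (-1 : R) ^ i
      ≤ ∑ i ∈ S, (1 + (-1 : R) ^ i) / 2 := sum_le_sum fun i _ => by linarith [h i]
    _ ≤ ∑ i ∈ range m, (1 + (-1 : R) ^ i) / 2 :=
        sum_le_sum_of_subset_of_nonneg hS fun i _ _ => by linarith [h i]
    _ = (m + ∑ i ∈ range m, (-1 : R) ^ i) / 2 := by simp [← sum_div, sum_add_distrib]
    _ ≤ (m + 1) / 2 := by rw [neg_one_geom_sum]; split_ifs <;> linarith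

lemma neg_half_le_sum_neg_one_pow_of_subset_range (hS : S ⊆ range m) :
    -(m / 2 : R) ≤ ∑ i ∈ S, (-1 : R) ^ i := by
  have h i := abs_le.mp (abs_neg_one_pow (α := R) i).le
  calc -(m / 2 : R)
      ≤ (-m + ∑ i ∈ range m, (-1 : R) ^ i) / 2 := by
        rw [neg_one_geom_sum]; split_ifs <;> linarith
    _ = ∑ i ∈ range m, (-1 + (-1 : R) ^ i) / 2 := by simp [← sum_div, sum_add_distrib]
    _ ≤ ∑ i ∈ S, (-1 + (-1 : R) ^ i) / 2 :=
        sum_le_sum_of_subset_of_nonpos' hS fun i _ _ => by linarith [h i]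
    _ ≤ ∑ i ∈ S, (-1 : R) ^ i := sum_le_sum fun i _ => by linarith [h i]

end AlternatingSum

lemma two_pow_lt_two_pow_succ_sub_sum {m : ℕ} {S : Finset ℕ} (hS : S ⊆ range m) :
    (2 : ℝ) ^ m < 2 ^ (m + 1) - ∑ i ∈ S, (2 : ℝ) ^ i := by
  have hsum : ∑ i ∈ S, 2 ^ i < 2 ^ m := Nat.geomSum_lt le_rfl fun i hi => mem_range.mp (hS hi)
  have : ∑ i ∈ S, (2 : ℝ) ^ i < 2 ^ m := by exact_mod_cast hsum
  rw [pow_succ]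
  linarith

lemma nat_lt_logb_two_of_two_pow_lt {m : ℕ} {x : ℝ} (hx : (2 : ℝ) ^ m < x) :
    (m : ℝ) < Real.logb 2 x := by
  rw [Real.lt_logb_iff_rpow_lt one_lt_two ((by positivity : (0 : ℝ) < 2 ^ m).trans hx),
    Real.rpow_natCast]
  exact hx

lemma half_logb_bounds_of_eq_sub_sum {m : ℕ} {S : Finset ℕ} {c Z₁ Z₂ : ℝ} (hS : S ⊆ range m)
    (hc : |c| ≤ 2) (hZ₁ : Z₁ = 2 ^ (m + 1) - ∑ i ∈ S, (2 : ℝ) ^ i)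
    (hZ₂ : Z₂ = c - ∑ i ∈ S, (-1 : ℝ) ^ i) :
    -(1 / 2) * Real.logb 2 Z₁ - 5 / 2 < Z₂ ∧ Z₂ < (1 / 2) * Real.logb 2 Z₁ + 2 := by
  have hlog := nat_lt_logb_two_of_two_pow_lt (hZ₁ ▸ two_pow_lt_two_pow_succ_sub_sum hS)
  have hlo := neg_half_le_sum_neg_one_pow_of_subset_range (R := ℝ) hS
  have hhi := sum_neg_one_pow_le_of_subset_range (R := ℝ) hS
  have hc₂ := abs_le.mp hc
  constructor <;> linarith

/-- The weight/superweight point `(Z₁, Z₂)` of any standard monomial (either type) lies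
strictly between the logarithmic curves `Z₂ = -½ log₂ Z₁ - 5/2` and `Z₂ = ½ log₂ Z₁ + 2`. -/
theorem stmt_8 (n : ℕ) (S : Finset ℕ) (Z₁ Z₂ : ℝ)
    (h : (S ⊆ Finset.range (n - 1) ∧
            Z₁ = 2 ^ n - ∑ i ∈ S, (2 : ℝ) ^ i ∧
            Z₂ = (-1 : ℝ) ^ n - ∑ i ∈ S, (-1 : ℝ) ^ i) ∨
         (2 ≤ n ∧ S ⊆ Finset.range (n - 2) ∧
            Z₁ = 2 ^ (n - 1) - ∑ i ∈ S, (2 : ℝ) ^ i ∧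
            Z₂ = (-1 : ℝ) ^ n - (-1 : ℝ) ^ (n - 1) - ∑ i ∈ S, (-1 : ℝ) ^ i)) :
    -(1 / 2) * Real.logb 2 Z₁ - 5 / 2 < Z₂ ∧ Z₂ < (1 / 2) * Real.logb 2 Z₁ + 2 := by
  rcases h with ⟨hS, hZ₁, hZ₂⟩ | ⟨hn, hS, hZ₁, hZ₂⟩
  · cases n with
    | zero =>
      obtain rfl : S = ∅ := by simpa using hS
      simp only [pow_zero, sum_empty, sub_zero] at hZ₁ hZ₂
      subst hZ₁ hZ₂
      norm_num
    | succ m =>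
      exact half_logb_bounds_of_eq_sub_sum hS (by rw [abs_neg_one_pow]; norm_num) hZ₁ hZ₂
  · obtain ⟨m, rfl⟩ := Nat.exists_eq_add_of_le' hn
    have hZ₂' : Z₂ = 2 * (-1) ^ m - ∑ i ∈ S, (-1 : ℝ) ^ i := by
      rw [hZ₂, show m + 2 - 1 = m + 1 by omega]; ring
    exact half_logb_bounds_of_eq_sub_sum hS (by rw [abs_mul, abs_neg_one_pow]; norm_num) hZ₁ hZ₂'
end

section
/- The sequence defined by the substitution rule a ↦ bb, b ↦ ab on the infinite word over {a, b} arising in the width computation is not eventually periodic. Concretely: the fixed-point word obtained by iterating σ(a) = bb, σ(b) = ab is not eventually periodic. -/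
lemma stmt_18_aux (w : ℕ → Bool)
    (hfix : ∀ n : ℕ, w n =
      if n % 4 = 0 then w (n / 4) else if n % 4 = 2 then false else true) :
    ∀ p N : ℕ, 0 < p → ¬ ∀ n : ℕ, N ≤ n → w (n + p) = w n := by
  intro p
  induction p using Nat.strong_induction_on with
  | _ p ih =>
  intro N hp h
  rcases (by omega : p % 4 = 0 ∨ p % 4 = 1 ∨ p % 4 = 2 ∨ p % 4 = 3) with hm | hm | hm | hm
  · -- p % 4 = 0, reduce to p / 4
    refine ih (p / 4) (by omega) N (by omega) ?_
    intro k hk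
    have h1 := hfix (4 * k + p)
    have h2 := hfix (4 * k)
    have h3 := h (4 * k) (by omega)
    have e1 : (4 * k + p) % 4 = 0 := by omega
    have e2 : (4 * k + p) / 4 = k + p / 4 := by omega
    have e3 : (4 * k) % 4 = 0 := by omega
    have e4 : (4 * k) / 4 = k := by omega
    rw [e1, e2] at h1
    rw [e3, e4] at h2
    simp only [if_pos rfl] at h1 h2
    rw [h1, h2] at h3
    exact h3
  · -- p % 4 = 1
    have h1 := hfix (4 * N + 2)
    have h2 := hfix (4 * N + 2 + p)
    have h3 := h (4 * N + 2) (by omega)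
    have e1 : (4 * N + 2) % 4 = 2 := by omega
    have e2 : (4 * N + 2 + p) % 4 = 3 := by omega
    rw [e1] at h1
    rw [e2] at h2
    norm_num at h1 h2
    rw [h1, h2] at h3
    exact Bool.noConfusion h3
  · -- p % 4 = 2
    set m := 4 * (N + p) + 1 with hmdef
    set n := 16 * N + 15 * p + 4 with hndef
    have h1 := hfix n
    have h2 := hfix (n + p)
    have h4 := hfix m
    have h3 := h n (by omega)
    have e1 : n % 4 = 2 := by omega
    have e2 : (n + p) % 4 = 0 := by omega
    have e3 : (n + p) / 4 = m := by omega
    have e4 : m % 4 = 1 := by omega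
    rw [e1] at h1
    rw [e2, e3] at h2
    rw [e4] at h4
    norm_num at h1 h2 h4
    rw [h1, h2, h4] at h3
    exact Bool.noConfusion h3
  · -- p % 4 = 3
    have h1 := hfix (4 * N + 2)
    have h2 := hfix (4 * N + 2 + p)
    have h3 := h (4 * N + 2) (by omega)
    have e1 : (4 * N + 2) % 4 = 2 := by omega
    have e2 : (4 * N + 2 + p) % 4 = 1 := by omega
    rw [e1] at h1
    rw [e2] at h2
    norm_num at h1 h2
    rw [h1, h2] at h3
    exact Bool.noConfusion h3

/-- The infinite word over `{a, b}` (encoded `a = false`, `b = true`) fixed under the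
square of the substitution `σ(a) = bb`, `σ(b) = ab` (so `σ²(a) = abab`, `σ²(b) = bbab`,
i.e. `w(4k) = w(k)`, `w(4k+1) = b`, `w(4k+2) = a`, `w(4k+3) = b`) is not eventually
periodic. -/
theorem stmt_18 (w : ℕ → Bool)
    (hfix : ∀ n : ℕ, w n =
      if n % 4 = 0 then w (n / 4) else if n % 4 = 2 then false else true) :
    ¬ ∃ p N : ℕ, 0 < p ∧ ∀ n : ℕ, N ≤ n → w (n + p) = w n := by
  rintro ⟨p, N, hp, h⟩
  exact stmt_18_aux w hfix p N hp h
end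

section
/- For every n ≥ 1, the dimension of the degree-n component R_n of the degree ℕ-grading of the Lie superalgebra R (char K ≠ 2), equivalently dim R^n/R^{n+1} for the lower central series, lies in {2, 3, 4}; i.e., counting standard monomials w (encoded as above) with deg(w) = X₁ + X₂ = n, where (X₁,X₂) = ((Z₁+2Z₂)/3, (Z₁-Z₂)/3) and (Z₁,Z₂) = (wt(w), swt(w)), the count is always 2, 3, or 4. -/
/-!
Write `J` for the Jacobsthal numbers, `3 J k = 2 ^ k - (-1) ^ k`, and `σ S = ∑ i ∈ S, J (i + 1)`.
Then `2 Z₁ + Z₂ = 3 (J (l + 1) - σ S)` for a monomial of the first type and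
`3 (J (l + 1) - J l - σ S)` for one of the second type. The sums `σ S` over
`S ⊆ {0, …, m - 1}` take every value from `0` to `σ {0, …, m - 1}`, each once or twice, and the two
extreme values once. If `J l < n ≤ J (l + 1)`, only the lengths `l, l + 1` (first type) and
`l, l + 1, l + 2` (second type) can have degree `n`, and a comparison of `n` with the ranges of
these five counts shows that either two of them are nonzero, or three of which two are extreme
values; so there are 2, 3 or 4 monomials. Degree `1` is done by hand: there the excluded monomial
`x₀x₂v₃` is the only candidate of the second type.
-/

/-- A standard monomial is encoded by its length `l`, tail `S`, and type `t`
(`t = false`: first type, `S ⊆ {0,…,l-2}`; `t = true`: second type, `l ≥ 2`,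
`S ⊆ {0,…,l-3}`, excluding the false monomial `x₀x₂v₃`). -/
def isStdMon (l : ℕ) (S : Finset ℕ) (t : Bool) : Prop :=
  if t then 2 ≤ l ∧ S ⊆ Finset.range (l - 2) ∧ ¬(l = 3 ∧ S = {0})
  else S ⊆ Finset.range (l - 1)

/-- Weight `Z₁` of a standard monomial. -/
def stdWt (l : ℕ) (S : Finset ℕ) (t : Bool) : ℚ :=
  (if t then 2 ^ (l - 1) else 2 ^ l) - ∑ i ∈ S, (2 : ℚ) ^ i

/-- Superweight `Z₂` of a standard monomial. -/
def stdSwt (l : ℕ) (S : Finset ℕ) (t : Bool) : ℚ :=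
  (if t then 2 * (-1) ^ l else (-1) ^ l) - ∑ i ∈ S, (-1 : ℚ) ^ i

/-- Degree `X₁ + X₂ = (2Z₁ + Z₂)/3` of a standard monomial. -/
def stdDeg (l : ℕ) (S : Finset ℕ) (t : Bool) : ℚ :=
  (2 * stdWt l S t + stdSwt l S t) / 3

open Finset

def jacobsthal : ℕ → ℕ
  | 0 => 0
  | 1 => 1
  | n + 2 => jacobsthal (n + 1) + 2 * jacobsthal n

section Jacobsthal

@[simp] theorem jacobsthal_zero : jacobsthal 0 = 0 := rfl

@[simp] theorem jacobsthal_one : jacobsthal 1 = 1 := rfl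

theorem jacobsthal_add_two (n : ℕ) :
    jacobsthal (n + 2) = jacobsthal (n + 1) + 2 * jacobsthal n := rfl

theorem three_mul_jacobsthal {R : Type*} [CommRing R] (n : ℕ) :
    3 * (jacobsthal n : R) = 2 ^ n - (-1) ^ n := by
  induction n using Nat.twoStepInduction with
  | zero => simp
  | one => norm_num
  | more n ih₀ ih₁ =>
    rw [jacobsthal_add_two]
    push_cast
    linear_combination ih₁ + 2 * ih₀

theorem jacobsthal_succ (n : ℕ) :
    (jacobsthal (n + 1) : ℤ) = 2 * jacobsthal n + (-1) ^ n := by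
  induction n with
  | zero => simp
  | succ n ih =>
    push_cast [jacobsthal_add_two, pow_succ]
    linear_combination -ih

theorem jacobsthal_mono : Monotone jacobsthal :=
  monotone_nat_of_le_succ fun
    | 0 => zero_le_one
    | n + 1 => by rw [jacobsthal_add_two]; omega

theorem jacobsthal_pos {n : ℕ} (hn : 0 < n) : 0 < jacobsthal n :=
  jacobsthal_mono (Nat.one_le_iff_ne_zero.mpr hn.ne')

theorem jacobsthal_lt_jacobsthal_succ {n : ℕ} (hn : 2 ≤ n) :
    jacobsthal n < jacobsthal (n + 1) := by
  obtain ⟨k, rfl⟩ := Nat.exists_eq_add_of_le' hn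
  have := jacobsthal_pos k.add_one_pos
  show jacobsthal (k + 2) < jacobsthal (k + 2) + 2 * jacobsthal (k + 1)
  omega

theorem lt_jacobsthal_add_two (n : ℕ) : n < jacobsthal (n + 2) := by
  induction n with
  | zero => decide
  | succ n ih =>
    have := jacobsthal_pos n.add_one_pos
    show n + 1 < jacobsthal (n + 2) + 2 * jacobsthal (n + 1)
    omega

theorem exists_jacobsthal_lt_le {n : ℕ} (hn : 2 ≤ n) :
    ∃ l, 2 ≤ l ∧ jacobsthal l < n ∧ n ≤ jacobsthal (l + 1) := by
  classical
  have hex : ∃ k, n ≤ jacobsthal (k + 1) := ⟨n + 1, (lt_jacobsthal_add_two n).le⟩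
  obtain ⟨k, hk⟩ : ∃ k, Nat.find hex = k + 1 :=
    Nat.exists_eq_succ_of_ne_zero fun h ↦ by simpa [h] using (Nat.find_spec hex).trans_lt' hn
  have hmin := Nat.find_min hex (show k < Nat.find hex by omega)
  have hspec := Nat.find_spec hex
  rw [hk] at hspec
  refine ⟨k + 1, ?_, by simpa using hmin, hspec⟩
  rcases k with _ | k
  · simp [jacobsthal_add_two] at hspec
    omega
  · omega

end Jacobsthal

section SubsetSums

def jacobsthalSum (S : Finset ℕ) : ℕ := ∑ i ∈ S, jacobsthal (i + 1)

theorem three_mul_jacobsthalSum {R : Type*} [CommRing R] (S : Finset ℕ) :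
    3 * (jacobsthalSum S : R) = 2 * ∑ i ∈ S, (2 : R) ^ i + ∑ i ∈ S, (-1 : R) ^ i := by
  simp only [jacobsthalSum, Nat.cast_sum, mul_sum, ← sum_add_distrib, three_mul_jacobsthal]
  exact sum_congr rfl fun i _ ↦ by ring

theorem jacobsthalSum_le_of_subset {S T : Finset ℕ} (h : S ⊆ T) :
    jacobsthalSum S ≤ jacobsthalSum T :=
  sum_le_sum_of_subset h

theorem jacobsthalSum_range_succ (m : ℕ) :
    jacobsthalSum (range (m + 1)) = jacobsthalSum (range m) + jacobsthal (m + 1) :=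
  sum_range_succ _ _

theorem two_mul_jacobsthalSum_range_add_one (m : ℕ) :
    2 * jacobsthalSum (range m) + 1 = jacobsthal (m + 2) := by
  induction m with
  | zero => rfl
  | succ m ih =>
    rw [jacobsthalSum_range_succ]
    show _ = jacobsthal (m + 2) + 2 * jacobsthal (m + 1)
    omega

theorem two_mul_jacobsthalSum_range_pred_add_one (l : ℕ) :
    2 * jacobsthalSum (range (l - 1)) + 1 = jacobsthal (l + 1) := by
  rcases l with _ | l
  · rfl
  · exact two_mul_jacobsthalSum_range_add_one l

theorem two_mul_jacobsthalSum_range_sub_two_add_one {l : ℕ} (hl : 2 ≤ l) :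
    2 * jacobsthalSum (range (l - 2)) + 1 = jacobsthal l := by
  simpa [Nat.sub_add_cancel hl] using two_mul_jacobsthalSum_range_add_one (l - 2)

theorem jacobsthalSum_range_le (m : ℕ) :
    jacobsthalSum (range m) ≤ jacobsthal (m + 1) ∧
      jacobsthal (m + 1) ≤ jacobsthalSum (range m) + 1 := by
  have h₂ := two_mul_jacobsthalSum_range_add_one m
  have h₁ : (jacobsthal (m + 2) : ℤ) = _ := jacobsthal_succ (m + 1)
  rcases neg_one_pow_eq_or ℤ (m + 1) with h | h <;> omega

def subsetSumCount (m : ℕ) (s : ℤ) : ℕ :=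
  #{S ∈ (range m).powerset | (jacobsthalSum S : ℤ) = s}

theorem subsetSumCount_zero_left (s : ℤ) : subsetSumCount 0 s = if s = 0 then 1 else 0 := by
  rw [subsetSumCount, range_zero, powerset_empty, filter_singleton]
  split_ifs <;> simp_all [jacobsthalSum, eq_comm]

theorem subsetSumCount_succ (m : ℕ) (s : ℤ) :
    subsetSumCount (m + 1) s =
      subsetSumCount m s + subsetSumCount m (s - jacobsthal (m + 1)) := by
  simp only [subsetSumCount, card_filter, range_add_one, sum_powerset_insert notMem_range_self]
  congr 1
  refine sum_congr rfl fun S hS ↦ ?_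
  have hm : m ∉ S := fun h ↦ notMem_range_self (mem_powerset.1 hS h)
  rw [jacobsthalSum, sum_insert hm, ← jacobsthalSum]
  push_cast
  congr 1
  exact propext ⟨fun h ↦ by omega, fun h ↦ by omega⟩

theorem subsetSumCount_eq_zero {m : ℕ} {s : ℤ}
    (hs : s < 0 ∨ (jacobsthalSum (range m) : ℤ) < s) : subsetSumCount m s = 0 := by
  rw [subsetSumCount, card_eq_zero, filter_eq_empty_iff]
  intro S hS
  have := jacobsthalSum_le_of_subset (mem_powerset.1 hS)
  omega

theorem subsetSumCount_zero (m : ℕ) : subsetSumCount m 0 = 1 := by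
  induction m with
  | zero => simp [subsetSumCount_zero_left]
  | succ m ih =>
    have := jacobsthal_pos m.add_one_pos
    rw [subsetSumCount_succ, ih, subsetSumCount_eq_zero (Or.inl (by omega))]

theorem subsetSumCount_top (m : ℕ) :
    subsetSumCount m (jacobsthalSum (range m)) = 1 := by
  induction m with
  | zero => simp [subsetSumCount_zero_left, jacobsthalSum]
  | succ m ih =>
    have := jacobsthal_pos m.add_one_pos
    rw [subsetSumCount_succ, jacobsthalSum_range_succ, Nat.cast_add, add_sub_cancel_right, ih,
      subsetSumCount_eq_zero (Or.inr (by omega))]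

theorem one_le_subsetSumCount {m : ℕ} {s : ℤ} (h₀ : 0 ≤ s)
    (h₁ : s ≤ jacobsthalSum (range m)) : 1 ≤ subsetSumCount m s := by
  induction m generalizing s with
  | zero => rw [le_antisymm (by simpa [jacobsthalSum] using h₁) h₀, subsetSumCount_zero]
  | succ m ih =>
    rw [jacobsthalSum_range_succ] at h₁
    have := jacobsthalSum_range_le m
    rw [subsetSumCount_succ]
    by_cases hs : s ≤ jacobsthalSum (range m)
    · exact (ih h₀ hs).trans (Nat.le_add_right _ _)
    · exact (ih (by omega) (by push_cast at h₁; omega)).trans (Nat.le_add_left _ _)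

theorem subsetSumCount_le_two (m : ℕ) (s : ℤ) : subsetSumCount m s ≤ 2 := by
  induction m generalizing s with
  | zero => rw [subsetSumCount_zero_left]; split_ifs <;> omega
  | succ m ih =>
    have := jacobsthalSum_range_le m
    rw [subsetSumCount_succ]
    by_cases h₁ : s - jacobsthal (m + 1) < 0
    · rw [subsetSumCount_eq_zero (Or.inl h₁)]; exact ih s
    by_cases h₂ : (jacobsthalSum (range m) : ℤ) < s
    · rw [subsetSumCount_eq_zero (Or.inr h₂), zero_add]; exact ih _
    -- both summands are nonzero only for `s = jacobsthalSum (range m) = jacobsthal (m + 1)`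
    obtain rfl : s = jacobsthalSum (range m) := by omega
    rw [subsetSumCount_top, show ((jacobsthalSum (range m) : ℕ) : ℤ) - jacobsthal (m + 1) = 0 by
      omega, subsetSumCount_zero]

end SubsetSums

open Classical in
theorem Set.ncard_eq_sum_card_fiberwise {α β γ : Type*} {A : Set (α × β × γ)}
    (P : Finset (α × γ)) (B : α × γ → Finset β)
    (hA : ∀ e ∈ A, (e.1, e.2.2) ∈ P ∧ e.2.1 ∈ B (e.1, e.2.2)) :
    A.ncard = ∑ p ∈ P, #{b ∈ B p | (p.1, b, p.2) ∈ A} := by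
  have hA' : A = ↑(P.biUnion fun p ↦ {b ∈ B p | (p.1, b, p.2) ∈ A}.image (p.1, ·, p.2)) := by
    ext ⟨a, b, c⟩
    simp only [Finset.coe_biUnion, Finset.coe_image, Finset.coe_filter, mem_iUnion, mem_image,
      mem_ofPred_eq, Prod.mk.injEq, Finset.mem_coe]
    constructor
    · intro h
      exact ⟨(a, c), (hA _ h).1, b, ⟨(hA _ h).2, h⟩, rfl, rfl, rfl⟩
    · rintro ⟨p, -, b', ⟨-, h⟩, rfl, rfl, rfl⟩
      exact h
  nth_rw 1 [hA']
  rw [ncard_coe_finset, Finset.card_biUnion]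
  · exact sum_congr rfl fun p _ ↦ Finset.card_image_of_injective _ fun b b' h ↦ by simpa using h
  · intro p _ q _ hpq
    simp only [Function.onFun, Finset.disjoint_left, Finset.mem_image]
    rintro _ ⟨b, -, rfl⟩ ⟨b', -, h⟩
    simp only [Prod.mk.injEq] at h
    exact hpq (Prod.ext h.1 h.2.2).symm

section StandardMonomials

variable {n l : ℕ} {S : Finset ℕ}

def stdMonOfDeg (n : ℕ) : Set (ℕ × Finset ℕ × Bool) :=
  {e | isStdMon e.1 e.2.1 e.2.2 ∧ stdDeg e.1 e.2.1 e.2.2 = n}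

theorem isStdMon.subset_range {t : Bool} (h : isStdMon l S t) : S ⊆ range (l - 1) := by
  unfold isStdMon at h
  cases t
  · exact h
  · exact h.2.1.trans (range_subset_range.2 (by omega))

theorem stdDeg_false : stdDeg l S false = jacobsthal (l + 1) - jacobsthalSum S := by
  have h₁ := three_mul_jacobsthal (R := ℚ) (l + 1)
  have h₂ := three_mul_jacobsthalSum (R := ℚ) S
  simp only [stdDeg, stdWt, stdSwt, Bool.false_eq_true, if_false]
  linear_combination (h₂ - h₁) / 3

-- `J l + (-1) ^ l = J (l + 1) - J l` absorbs the sign of the superweight.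
theorem stdDeg_true (hl : 1 ≤ l) :
    stdDeg l S true = jacobsthal (l + 1) - jacobsthal l - jacobsthalSum S := by
  obtain ⟨k, rfl⟩ := Nat.exists_eq_add_of_le' hl
  have h₀ := three_mul_jacobsthal (R := ℚ) (k + 1)
  have h₁ := three_mul_jacobsthal (R := ℚ) (k + 1 + 1)
  have h₂ := three_mul_jacobsthalSum (R := ℚ) S
  simp only [stdDeg, stdWt, stdSwt, if_true, Nat.add_sub_cancel]
  linear_combination (h₂ - h₁ + h₀) / 3

theorem mem_stdMonOfDeg_false :
    (l, S, false) ∈ stdMonOfDeg n ↔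
      S ⊆ range (l - 1) ∧ (jacobsthalSum S : ℤ) = jacobsthal (l + 1) - n := by
  simp only [stdMonOfDeg, Set.mem_ofPred_eq, isStdMon, Bool.false_eq_true, if_false,
    stdDeg_false, ← @Int.cast_inj ℚ]
  push_cast
  exact and_congr_right fun _ ↦ ⟨fun h ↦ by linarith, fun h ↦ by linarith⟩

theorem mem_stdMonOfDeg_true :
    (l, S, true) ∈ stdMonOfDeg n ↔
      (2 ≤ l ∧ S ⊆ range (l - 2) ∧ ¬(l = 3 ∧ S = {0})) ∧
        (jacobsthalSum S : ℤ) = jacobsthal (l + 1) - jacobsthal l - n := by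
  simp only [stdMonOfDeg, Set.mem_ofPred_eq, isStdMon, if_true]
  refine and_congr_right fun h ↦ ?_
  rw [stdDeg_true (by omega), ← @Int.cast_inj ℚ]
  push_cast
  exact ⟨fun h ↦ by linarith, fun h ↦ by linarith⟩

open Classical in
theorem card_stdMonOfDeg_fiber_false (n l : ℕ) :
    #{S ∈ (range (l - 1)).powerset | (l, S, false) ∈ stdMonOfDeg n} =
      subsetSumCount (l - 1) (jacobsthal (l + 1) - n) :=
  congrArg card <| filter_congr fun S hS ↦ by
    simp [mem_stdMonOfDeg_false, mem_powerset.1 hS]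

open Classical in
theorem card_stdMonOfDeg_fiber_true (hn : n ≠ 1) (hl : 2 ≤ l) :
    #{S ∈ (range (l - 1)).powerset | (l, S, true) ∈ stdMonOfDeg n} =
      subsetSumCount (l - 2) (jacobsthal (l + 1) - jacobsthal l - n) := by
  refine congrArg card (ext fun S ↦ ?_)
  simp only [mem_filter, mem_powerset, mem_stdMonOfDeg_true]
  constructor
  · rintro ⟨-, ⟨-, hS, -⟩, h⟩
    exact ⟨hS, h⟩
  · rintro ⟨hS, h⟩
    refine ⟨hS.trans (range_subset_range.2 (by omega)), ⟨hl, hS, ?_⟩, h⟩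
    rintro ⟨rfl, rfl⟩
    simp [jacobsthalSum, jacobsthal_add_two] at h
    omega

theorem jacobsthal_succ_mem_Ico_of_mem_stdMonOfDeg (he : (l, S, false) ∈ stdMonOfDeg n) :
    jacobsthal (l + 1) ∈ Set.Ico n (2 * n) := by
  obtain ⟨hS, hdeg⟩ := mem_stdMonOfDeg_false.1 he
  have := jacobsthalSum_le_of_subset hS
  have := two_mul_jacobsthalSum_range_pred_add_one l
  constructor <;> omega

theorem jacobsthal_mem_Icc_of_mem_stdMonOfDeg (he : (l, S, true) ∈ stdMonOfDeg n) :
    2 ≤ l ∧ jacobsthal l ∈ Set.Icc (n - 1) (2 * n + 1) := by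
  obtain ⟨⟨hl, hS, -⟩, hdeg⟩ := mem_stdMonOfDeg_true.1 he
  have := jacobsthalSum_le_of_subset hS
  have := two_mul_jacobsthalSum_range_sub_two_add_one hl
  have := jacobsthal_succ l
  refine ⟨hl, ?_, ?_⟩ <;> rcases neg_one_pow_eq_or ℤ l with h | h <;> omega

theorem two_le_of_mem_stdMonOfDeg_true (he : (l, S, true) ∈ stdMonOfDeg n) : 2 ≤ n := by
  obtain ⟨⟨hl, hS, hx₀x₂v₃⟩, hdeg⟩ := mem_stdMonOfDeg_true.1 he
  obtain rfl | rfl | hl4 : l = 2 ∨ l = 3 ∨ 4 ≤ l := by omega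
  · obtain rfl : S = ∅ := by simpa using hS
    simp [jacobsthalSum, jacobsthal_add_two] at hdeg
    omega
  · obtain rfl : S = ∅ := (subset_singleton_iff.1 (by simpa using hS)).resolve_right
      fun h ↦ hx₀x₂v₃ ⟨rfl, h⟩
    simp [jacobsthalSum, jacobsthal_add_two] at hdeg
    omega
  · obtain ⟨-, -, hJ⟩ := jacobsthal_mem_Icc_of_mem_stdMonOfDeg he
    have : 5 ≤ jacobsthal l := jacobsthal_mono hl4
    omega

theorem ncard_stdMonOfDeg_one : (stdMonOfDeg 1).ncard = 2 := by
  classical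
  rw [Set.ncard_eq_sum_card_fiberwise {(0, false), (1, false)} fun p ↦ (range (p.1 - 1)).powerset]
  · rw [sum_pair (by simp), card_stdMonOfDeg_fiber_false, card_stdMonOfDeg_fiber_false]
    simp [jacobsthal_add_two, subsetSumCount_zero]
  rintro ⟨l, S, t⟩ he
  refine ⟨?_, mem_powerset.2 he.1.subset_range⟩
  cases t
  · obtain ⟨-, h⟩ := jacobsthal_succ_mem_Ico_of_mem_stdMonOfDeg he
    have : l ≤ 1 := by
      by_contra! hl
      have : 3 ≤ jacobsthal (l + 1) := jacobsthal_mono (show 3 ≤ l + 1 by omega)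
      omega
    interval_cases l <;> simp
  · exact absurd (two_le_of_mem_stdMonOfDeg_true he) (by norm_num)

section Bracket

variable (hl : 2 ≤ l) (hlo : jacobsthal l < n) (hhi : n ≤ jacobsthal (l + 1))
include hl hlo hhi

theorem mem_lengths_of_mem_stdMonOfDeg {e : ℕ × Finset ℕ × Bool} (he : e ∈ stdMonOfDeg n) :
    (e.1, e.2.2) ∈
      ({(l, false), (l + 1, false), (l, true), (l + 1, true), (l + 2, true)} : Finset (ℕ × Bool)) := by
  obtain ⟨l', S, t⟩ := e
  have hgap : 2 * jacobsthal (l + 1) + 1 < jacobsthal (l + 3) := by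
    have : 3 ≤ jacobsthal (l + 2) := jacobsthal_mono (show 3 ≤ l + 2 by omega)
    show _ < jacobsthal (l + 2) + 2 * jacobsthal (l + 1)
    omega
  cases t
  · obtain ⟨h₁, h₂⟩ := jacobsthal_succ_mem_Ico_of_mem_stdMonOfDeg he
    have := jacobsthal_mono.reflect_lt (hlo.trans_le h₁)
    have := jacobsthal_mono.reflect_lt (show jacobsthal (l' + 1) < jacobsthal (l + 3) by omega)
    simp
    omega
  · obtain ⟨hl', h₁, h₂⟩ := jacobsthal_mem_Icc_of_mem_stdMonOfDeg he
    have hle : l ≤ l' := by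
      by_contra! h
      have := jacobsthal_lt_jacobsthal_succ hl'
      have := jacobsthal_mono (show l' + 1 ≤ l by omega)
      omega
    have := jacobsthal_mono.reflect_lt (show jacobsthal l' < jacobsthal (l + 3) by omega)
    simp
    omega

theorem ncard_stdMonOfDeg_eq :
    (stdMonOfDeg n).ncard =
      subsetSumCount (l - 1) (jacobsthal (l + 1) - n) +
      subsetSumCount l (jacobsthal (l + 2) - n) +
      subsetSumCount (l - 2) (jacobsthal (l + 1) - jacobsthal l - n) +
      subsetSumCount (l - 1) (jacobsthal (l + 2) - jacobsthal (l + 1) - n) +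
      subsetSumCount l (jacobsthal (l + 3) - jacobsthal (l + 2) - n) := by
  classical
  have hn : n ≠ 1 := by have := jacobsthal_pos (by omega : 0 < l); omega
  rw [Set.ncard_eq_sum_card_fiberwise _ (fun p ↦ (range (p.1 - 1)).powerset)
    fun e he ↦ ⟨mem_lengths_of_mem_stdMonOfDeg hl hlo hhi he, mem_powerset.2 he.1.subset_range⟩]
  rw [sum_insert (by simp), sum_insert (by simp), sum_insert (by simp), sum_pair (by simp),
    card_stdMonOfDeg_fiber_false, card_stdMonOfDeg_fiber_false,
    card_stdMonOfDeg_fiber_true hn hl, card_stdMonOfDeg_fiber_true hn (by omega),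
    card_stdMonOfDeg_fiber_true hn (by omega)]
  simp only [Nat.add_sub_cancel, show l + 1 - 2 = l - 1 by omega, add_assoc, Nat.reduceAdd]

theorem ncard_stdMonOfDeg_mem : (stdMonOfDeg n).ncard ∈ ({2, 3, 4} : Set ℕ) := by
  have count (m : ℕ) (s : ℤ) :
      (s < 0 ∨ jacobsthalSum (range m) < s → subsetSumCount m s = 0) ∧
      (s = 0 ∨ s = jacobsthalSum (range m) → subsetSumCount m s = 1) ∧
      (0 ≤ s → s ≤ jacobsthalSum (range m) → 1 ≤ subsetSumCount m s) ∧
      subsetSumCount m s ≤ 2 := by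
    refine ⟨subsetSumCount_eq_zero, ?_, one_le_subsetSumCount, subsetSumCount_le_two m s⟩
    rintro (rfl | rfl)
    exacts [subsetSumCount_zero m, subsetSumCount_top m]
  have := count (l - 1) (jacobsthal (l + 1) - n)
  have := count l (jacobsthal (l + 2) - n)
  have := count (l - 2) (jacobsthal (l + 1) - jacobsthal l - n)
  have := count (l - 1) (jacobsthal (l + 2) - jacobsthal (l + 1) - n)
  have := count l (jacobsthal (l + 3) - jacobsthal (l + 2) - n)
  have := two_mul_jacobsthalSum_range_add_one l
  have := two_mul_jacobsthalSum_range_pred_add_one l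
  have := two_mul_jacobsthalSum_range_sub_two_add_one hl
  have : jacobsthal (l + 2) = jacobsthal (l + 1) + 2 * jacobsthal l := jacobsthal_add_two l
  have : jacobsthal (l + 3) = jacobsthal (l + 2) + 2 * jacobsthal (l + 1) :=
    jacobsthal_add_two (l + 1)
  have := jacobsthal_succ l
  rw [ncard_stdMonOfDeg_eq hl hlo hhi]
  simp only [Set.mem_insert_iff, Set.mem_singleton_iff]
  rcases neg_one_pow_eq_or ℤ l with h | h <;> omega

end Bracket

end StandardMonomials

/-- For every `n ≥ 1`, the number of standard monomials of degree `n` (i.e. the dimension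
of the degree-`n` component of `R`, char `K ≠ 2`) lies in `{2, 3, 4}`. -/
theorem stmt_19 (n : ℕ) (hn : 1 ≤ n) :
    {e : ℕ × Finset ℕ × Bool |
      isStdMon e.1 e.2.1 e.2.2 ∧ stdDeg e.1 e.2.1 e.2.2 = n}.ncard
      ∈ ({2, 3, 4} : Set ℕ) := by
  change (stdMonOfDeg n).ncard ∈ _
  obtain rfl | hn := hn.eq_or_lt
  · simp [ncard_stdMonOfDeg_one]
  obtain ⟨l, hl, hlo, hhi⟩ := exists_jacobsthal_lt_le hn
  exact ncard_stdMonOfDeg_mem hl hlo hhi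
end
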